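/- (Persson's formula) Let w be a circular word with s copies of S and t copies of T, representing the circular ordering of two samples of sizes s and t. Then Watson's two-sample statistic satisfies (st(s+t)/2)·U²_{st} = st(st+2)/24 − (#STST(w)+#TSTS(w))/2, where the subsequence counts are taken in any linear representative of w (they are rotation-invariant). -/

import Mathlib

/-!
Write `a_k` for the number of `S` among the first `k` letters of `w`. Since
`d_k = (1/s + 1/t) a_k - k/t` is affine in `a_k`, the left-hand side is a polynomial in `s`, `t`
and the three prefix sums `Σ a_k`, `Σ a_k²`, `Σ k a_k`. Subsequence counts obey the last-letter
recursion `#(u y)(w x) = #(u y)(w) + [x = y] #u(w)`, so induction on `w` from the right gives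
closed forms in the same quantities for the counts of `S, T, ST, TS, STS, TST` and finally of
`STST + TSTS` (`STST` and `TSTS` separately have none). Comparing the two polynomials proves the
identity.
-/

inductive Letter | S | T
deriving DecidableEq, Repr

open Letter

/-- Number of occurrences of `u` as a (not necessarily contiguous) subsequence of `w`. -/
def cnt (u w : List Letter) : ℕ := w.sublists.count u

open Finset

theorem sum_sub_div_card_sq {ι K : Type*} [Field K] [CharZero K] (s : Finset ι) (f : ι → K) :
    ∑ i ∈ s, (f i - (∑ j ∈ s, f j) / #s) ^ 2
      = ∑ i ∈ s, f i ^ 2 - (∑ i ∈ s, f i) ^ 2 / #s := by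
  rcases s.eq_empty_or_nonempty with rfl | hs
  · simp
  have hcard : (#s : K) ≠ 0 := by simpa using hs.ne_empty
  simp only [sub_sq, sum_add_distrib, sum_sub_distrib, sum_const, nsmul_eq_mul, ← sum_mul,
    mul_assoc, ← mul_sum]
  field_simp
  ring

theorem cnt_nil_left (w : List Letter) : cnt [] w = 1 := by
  induction w using List.reverseRecOn with
  | nil => rfl
  | append_singleton w x ih =>
    rw [cnt, List.sublists_concat, List.count_append, ← cnt, ih, add_eq_left, List.count_eq_zero]
    simp

theorem cnt_concat (u w : List Letter) (y x : Letter) :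
    cnt (u ++ [y]) (w ++ [x]) = cnt (u ++ [y]) w + if y = x then cnt u w else 0 := by
  rw [cnt, List.sublists_concat, List.count_append, ← cnt]
  congr 1
  split_ifs with h
  · subst h
    exact List.count_map_of_injective _ _ (List.append_left_injective [y]) u
  · rw [List.count_eq_zero]
    simp [Ne.symm h]

theorem cnt_singleton (x : Letter) (w : List Letter) : cnt [x] w = w.count x := by
  induction w using List.reverseRecOn with
  | nil => simp [cnt]
  | append_singleton w y ih =>
    rw [← List.nil_append [x], cnt_concat, List.nil_append, ih, cnt_nil_left, List.count_append,
      List.count_singleton]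
    cases x <;> cases y <;> rfl

def prefixSum (f : ℕ → ℕ → ℚ) (w : List Letter) : ℚ :=
  ∑ k ∈ Icc 1 w.length, f k ((w.take k).count S)

theorem prefixSum_nil (f : ℕ → ℕ → ℚ) : prefixSum f [] = 0 := rfl

theorem prefixSum_concat (f : ℕ → ℕ → ℚ) (w : List Letter) (x : Letter) :
    prefixSum f (w ++ [x]) = prefixSum f w + f (w.length + 1) ((w ++ [x]).count S) := by
  rw [prefixSum, List.length_append, List.length_singleton, sum_Icc_succ_top (by omega),
    List.take_of_length_le (by simp)]
  congr 1
  refine sum_congr rfl fun k hk => ?_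
  rw [List.take_append_of_le_length (mem_Icc.1 hk).2]

theorem prefixSum_affine (α β : ℚ) (w : List Letter) :
    prefixSum (fun k c => α * c - β * k) w
      = α * prefixSum (fun _ c => c) w - β * w.length * (w.length + 1) / 2 := by
  induction w using List.reverseRecOn with
  | nil => simp [prefixSum_nil]
  | append_singleton w x ih =>
    rw [prefixSum_concat, prefixSum_concat, ih, List.length_append, List.length_singleton]
    push_cast; ring

theorem prefixSum_affine_sq (α β : ℚ) (w : List Letter) :
    prefixSum (fun k c => (α * c - β * k) ^ 2) w
      = α ^ 2 * prefixSum (fun _ c => (c : ℚ) ^ 2) w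
        - 2 * α * β * prefixSum (fun k c => k * c) w
        + β ^ 2 * w.length * (w.length + 1) * (2 * w.length + 1) / 6 := by
  induction w using List.reverseRecOn with
  | nil => simp [prefixSum_nil]
  | append_singleton w x ih =>
    rw [prefixSum_concat, prefixSum_concat, prefixSum_concat, ih, List.length_append,
      List.length_singleton]
    push_cast; ring

theorem count_S_concat (w : List Letter) (x : Letter) :
    ((w ++ [x]).count S : ℚ) = w.count S + if x = S then 1 else 0 := by
  cases x <;> simp

theorem count_S_add_count_T (w : List Letter) : w.count S + w.count T = w.length := by
  induction w with
  | nil => rfl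
  | cons x w ih => cases x <;> simp [← ih] <;> omega

theorem count_T_eq_length_sub (w : List Letter) : (w.count T : ℚ) = w.length - w.count S := by
  rw [← count_S_add_count_T]; push_cast; ring

theorem cnt_ST (w : List Letter) :
    (cnt [S, T] w : ℚ) = prefixSum (fun _ c => c) w - w.count S * (w.count S + 1) / 2 := by
  induction w using List.reverseRecOn with
  | nil => simp [cnt, prefixSum_nil]
  | append_singleton w x ih =>
    rw [show [S, T] = [S] ++ [T] from rfl, cnt_concat, prefixSum_concat, count_S_concat]
    cases x <;> simp [cnt_singleton, ih] <;> ring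

theorem cnt_TS (w : List Letter) :
    (cnt [T, S] w : ℚ) = w.count S * (w.length - w.count S) - prefixSum (fun _ c => c) w
      + w.count S * (w.count S + 1) / 2 := by
  induction w using List.reverseRecOn with
  | nil => simp [cnt, prefixSum_nil]
  | append_singleton w x ih =>
    rw [show [T, S] = [T] ++ [S] from rfl, cnt_concat, prefixSum_concat, count_S_concat]
    cases x <;> simp [cnt_singleton, ih, count_T_eq_length_sub] <;> ring

theorem cnt_STS (w : List Letter) :
    (cnt [S, T, S] w : ℚ) = w.count S * prefixSum (fun _ c => c) w
      - w.count S ^ 2 * (w.count S + 1) / 2 - prefixSum (fun _ c => (c : ℚ) ^ 2) w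
      + w.count S ^ 2 + w.count S * (w.count S - 1) * (2 * w.count S - 1) / 6 := by
  induction w using List.reverseRecOn with
  | nil => simp [cnt, prefixSum_nil]
  | append_singleton w x ih =>
    rw [show [S, T, S] = [S, T] ++ [S] from rfl, cnt_concat, prefixSum_concat, prefixSum_concat,
      count_S_concat]
    cases x <;> simp [cnt_ST, ih] <;> ring

theorem cnt_TST (w : List Letter) :
    (cnt [T, S, T] w : ℚ) = (w.length - w.count S) * (w.count S * (w.length - w.count S)
      - prefixSum (fun _ c => c) w + w.count S * (w.count S + 1) / 2)
      - (w.length * (w.length + 1) * (2 * w.length + 1) / 6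
        - 2 * prefixSum (fun k c => k * c) w + prefixSum (fun _ c => (c : ℚ) ^ 2) w
        - (w.length - w.count S) ^ 2)
      + (w.length - w.count S) * (w.length - w.count S - 1) * (2 * (w.length - w.count S) - 1) / 6
      := by
  induction w using List.reverseRecOn with
  | nil => simp [cnt, prefixSum_nil]
  | append_singleton w x ih =>
    rw [show [T, S, T] = [T, S] ++ [T] from rfl, cnt_concat, prefixSum_concat, prefixSum_concat,
      prefixSum_concat, count_S_concat]
    cases x <;> simp [cnt_TS, ih] <;> ring

theorem cnt_STST_add_cnt_TSTS (w : List Letter) :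
    (cnt [S, T, S, T] w + cnt [T, S, T, S] w : ℚ)
      = w.count S * (w.length - w.count S) * (w.count S * (w.length - w.count S) + 2) / 12
        + (prefixSum (fun _ c => c) w - w.count S * (w.length + 1) / 2) ^ 2
        - w.length * prefixSum (fun _ c => (c : ℚ) ^ 2) w
        + 2 * w.count S * prefixSum (fun k c => k * c) w
        - w.count S ^ 2 * (w.length + 1) * (2 * w.length + 1) / 6 := by
  induction w using List.reverseRecOn with
  | nil => simp [cnt, prefixSum_nil]
  | append_singleton w x ih =>
    rw [show [S, T, S, T] = [S, T, S] ++ [T] from rfl,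
      show [T, S, T, S] = [T, S, T] ++ [S] from rfl, cnt_concat, cnt_concat,
      prefixSum_concat, prefixSum_concat, prefixSum_concat, count_S_concat]
    cases x <;> simp [cnt_STS, cnt_TST] <;> linear_combination ih

theorem stmt18 (s t : ℕ) (hs : 0 < s) (ht : 0 < t)
    (w : List Letter) (hS : w.count S = s) (hT : w.count T = t)
    (d : ℕ → ℚ)
    (hd : ∀ k, d k = ((w.take k).count S : ℚ) / s - ((w.take k).count T : ℚ) / t)
    (dbar : ℚ) (hdbar : dbar = (∑ k ∈ Finset.Icc 1 (s + t), d k) / (s + t))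
    (U2 : ℚ)
    (hU2 : U2 = (s * t : ℚ) / ((s + t : ℚ) ^ 2) * ∑ k ∈ Finset.Icc 1 (s + t), (d k - dbar) ^ 2) :
    (s * t * (s + t) : ℚ) / 2 * U2
      = (s * t * (s * t + 2) : ℚ) / 24
        - (cnt [S,T,S,T] w + cnt [T,S,T,S] w : ℚ) / 2 := by
  have hlen : w.length = s + t := by rw [← count_S_add_count_T, hS, hT]
  have hd_affine : ∀ k ∈ Icc 1 (s + t),
      d k = (1 / s + 1 / t) * (w.take k).count S - 1 / t * k := by
    intro k hk
    rw [hd, count_T_eq_length_sub, List.length_take, min_eq_left (hlen ▸ (mem_Icc.1 hk).2)]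
    ring
  have hsum : ∑ k ∈ Icc 1 (s + t), d k
      = prefixSum (fun k c => (1 / s + 1 / t) * c - 1 / t * k) w := by
    rw [prefixSum, hlen]; exact sum_congr rfl hd_affine
  have hsum_sq : ∑ k ∈ Icc 1 (s + t), d k ^ 2
      = prefixSum (fun k c => ((1 / s + 1 / t) * c - 1 / t * k) ^ 2) w := by
    rw [prefixSum, hlen]; exact sum_congr rfl fun k hk => by rw [hd_affine k hk]
  have hvar : ∑ k ∈ Icc 1 (s + t), (d k - dbar) ^ 2
      = ∑ k ∈ Icc 1 (s + t), d k ^ 2 - (∑ k ∈ Icc 1 (s + t), d k) ^ 2 / (s + t) := by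
    rw [hdbar]; simpa using sum_sub_div_card_sq (Icc 1 (s + t)) d
  rw [hU2, hvar, hsum, hsum_sq, prefixSum_affine, prefixSum_affine_sq, cnt_STST_add_cnt_TSTS, hS,
    hlen]
  push_cast
  field_simp
  ring
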